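/- Then A_g·B(b)^g = ξ·B(b)·D_b^g, where D_b^g := diag(g(b), g(g'(b)), g(g'(g'(b)))), and B(b)^{g'} = B(b)·C, where C is the permutation matrix with rows (0,0,1), (1,0,0), (0,1,0). -/

import Mathlib

/-!
The columns of `B(b)` are `v(x) = (1, (ξ g x)⁻¹, x)` for `x = b, g' b, g'² b`. Since `g'`
commutes with `g` and fixes `ξ`, each of these `x` satisfies `x · g x · g² x = ξ⁻²`, and for
such `x` the vector `v(x)` is an eigenvector of the semilinear map `v ↦ A_g v^g` with eigenvalue
`ξ g x`: the last coordinate is the norm equation in the form `(ξ g² x)⁻¹ = ξ x g x`. Reading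
this column by column gives `A_g B^g = ξ B D_b^g`. Applying `g'` sends `v(x)` to `v(g' x)`, and
`g'³ = id`, so `g'` permutes the columns of `B` cyclically, which is right multiplication by `C`.
-/

open Matrix

theorem mul_mul_eq_inv_of_mul_mul_eq_inv_sq {F : Type*} [Field F] {ξ a b c : F}
    (h : a * b * c = (ξ ^ 2)⁻¹) : ξ * (a * b) = (ξ * c)⁻¹ := by
  rcases eq_or_ne ξ 0 with rfl | hξ
  · simp
  refine eq_inv_of_mul_eq_one_left ?_
  rw [show ξ * (a * b) * (ξ * c) = ξ ^ 2 * (a * b * c) by ring, h,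
    mul_inv_cancel₀ (pow_ne_zero 2 hξ)]

theorem mul_map_eq_mul_diagonal {m n R : Type*} [Fintype m] [Fintype n] [DecidableEq m]
    [CommSemiring R] (σ : R → R) (A : Matrix n n R) (B : Matrix n m R) (d : m → R)
    (h : ∀ j, A *ᵥ (σ ∘ Bᵀ j) = d j • Bᵀ j) :
    A * B.map σ = B * diagonal d := by
  ext i j
  rw [mul_diagonal]
  simpa [mul_apply, mulVec, dotProduct, mul_comm] using congrFun (h j) i

theorem transpose_fin_three {α : Type*} (a b c d e f g h i : α) :
    !![a, b, c; d, e, f; g, h, i]ᵀ = !![a, d, g; b, e, h; c, f, i] := by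
  ext i j
  fin_cases i <;> fin_cases j <;> rfl

section RingHomClass

variable {F G : Type*} [Field F] [FunLike G F F] [RingHomClass G F F]

theorem mulVec_comp_eq_smul_of_mul_mul_eq_inv_sq (g : G) {ξ x : F} (hξ : ξ ≠ 0)
    (hgξ : g ξ = ξ) (hx : x * g x * g (g x) = (ξ ^ 2)⁻¹) :
    !![0, 0, ξ; 1, 0, 0; 0, 1, 0] *ᵥ (g ∘ ![1, (ξ * g x)⁻¹, x]) =
      (ξ * g x) • ![1, (ξ * g x)⁻¹, x] := by
  have hprod : x * g x * g (g x) ≠ 0 := hx ▸ inv_ne_zero (pow_ne_zero 2 hξ)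
  have hgx : g x ≠ 0 := right_ne_zero_of_mul (left_ne_zero_of_mul hprod)
  have hlast := mul_mul_eq_inv_of_mul_mul_eq_inv_sq hx
  ext i; fin_cases i
  · simp [vecHead, vecTail]
  · simpa [vecHead, vecTail] using (mul_inv_cancel₀ (mul_ne_zero hξ hgx)).symm
  · simpa [vecHead, vecTail, hgξ, mul_comm, mul_left_comm] using hlast.symm

theorem mul_mul_eq_inv_sq_map_of_commute (g σ : G) (hcomm : ∀ x, g (σ x) = σ (g x))
    {ξ : F} (hσξ : σ ξ = ξ) {x : F} (hx : x * g x * g (g x) = (ξ ^ 2)⁻¹) :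
    σ x * g (σ x) * g (g (σ x)) = (ξ ^ 2)⁻¹ := by
  simpa [hcomm, hσξ] using congrArg σ hx

end RingHomClass

theorem stmt_17 (F : Type*) [Field F] (g g' : F ≃+* F)
    (hcomm : ∀ x : F, g (g' x) = g' (g x))
    (hg'3 : ∀ x : F, g' (g' (g' x)) = x)
    (ξ : F) (hξ : ξ ≠ 0) (hgξ : g ξ = ξ) (hg'ξ : g' ξ = ξ)
    (b : F) (hnorm : b * g b * g (g b) = (ξ ^ 2)⁻¹) :
    !![0, 0, ξ; 1, 0, 0; 0, 1, 0] *
        (!![(1 : F), 1, 1;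
            (ξ * g b)⁻¹, (ξ * g (g' b))⁻¹, (ξ * g (g' (g' b)))⁻¹;
            b, g' b, g' (g' b)]).map ⇑g =
      ξ • (!![(1 : F), 1, 1;
              (ξ * g b)⁻¹, (ξ * g (g' b))⁻¹, (ξ * g (g' (g' b)))⁻¹;
              b, g' b, g' (g' b)] *
            Matrix.diagonal ![g b, g (g' b), g (g' (g' b))]) ∧
      (!![(1 : F), 1, 1;
          (ξ * g b)⁻¹, (ξ * g (g' b))⁻¹, (ξ * g (g' (g' b)))⁻¹;
          b, g' b, g' (g' b)]).map ⇑g' =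
        !![(1 : F), 1, 1;
           (ξ * g b)⁻¹, (ξ * g (g' b))⁻¹, (ξ * g (g' (g' b)))⁻¹;
           b, g' b, g' (g' b)] * !![0, 0, 1; 1, 0, 0; 0, 1, 0] := by
  have hnorm₁ := mul_mul_eq_inv_sq_map_of_commute g g' hcomm hg'ξ hnorm
  have hnorm₂ := mul_mul_eq_inv_sq_map_of_commute g g' hcomm hg'ξ hnorm₁
  refine ⟨?_, ?_⟩
  · rw [← Matrix.mul_smul, ← diagonal_smul]
    refine mul_map_eq_mul_diagonal g _ _ _ ?_
    rw [transpose_fin_three]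
    have hcol := fun x : F => mulVec_comp_eq_smul_of_mul_mul_eq_inv_sq (x := x) g hξ hgξ
    intro j
    fin_cases j
    exacts [hcol b hnorm, hcol (g' b) hnorm₁, hcol (g' (g' b)) hnorm₂]
  · ext i j
    fin_cases i <;> fin_cases j <;> simp [hcomm, hg'3, hg'ξ]
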